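/- arXiv:1410.8328 — 2 statements merged into one kernel-verified Lean document; each statement's English description precedes it below -/
import Mathlib

section
/- For every n ≥ 1, the murtage number of the underlying graph of the finite Jaco graph J_n(1) satisfies 0 ≤ m(J_n(1)) ≤ 3. -/
open SimpleGraph

/-- In-degree of vertex `j` in the infinite Jaco graph `J_∞(1)`:
the number of `i < j` with an arc `(v_i, v_j)`, i.e. `i < j` and `j ≤ 2i - d⁻(v_i)`. -/
noncomputable def jacoInDeg (j : ℕ) : ℕ :=
  Nat.strongRecOn j fun j ih =>
    ((Finset.range j).attach.filter
      (fun i => j ≤ 2 * i.1 - ih i.1 (Finset.mem_range.mp i.2))).card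

/-- Out-degree of vertex `i` in `J_∞(1)`: the number of `j` with `i < j ≤ 2i - d⁻(v_i)`. -/
noncomputable def jacoOutDeg (i : ℕ) : ℕ := (Finset.Ioc i (2 * i - jacoInDeg i)).card

/-- The underlying (undirected, simple) graph of the infinite Jaco graph `J_∞(1)` on `ℕ`,
with vertex `i` playing the role of `v_i`. -/
def JacoInf : SimpleGraph ℕ where
  Adj i j := (i < j ∧ j ≤ 2 * i - jacoInDeg i) ∨ (j < i ∧ i ≤ 2 * j - jacoInDeg j)
  symm := ⟨fun i j h => Or.symm h⟩
  loopless := ⟨fun i h => by rcases h with ⟨h, -⟩ | ⟨h, -⟩ <;> omega⟩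

/-- The underlying graph of the finite Jaco graph `J_n(1)`: the subgraph of `J_∞(1)`
induced by `{v_1, …, v_n}`, with `(k : Fin n)` representing `v_{k+1}`. -/
def Jaco (n : ℕ) : SimpleGraph (Fin n) := JacoInf.comap (fun k => (k : ℕ) + 1)

/-- `s` is an independent set of `G`. -/
def IsIndepSet {V : Type*} (G : SimpleGraph V) (s : Set V) : Prop :=
  s.Pairwise fun a b => ¬ G.Adj a b

/-- The independence number of `G`. -/
noncomputable def indepNum {V : Type*} [Fintype V] (G : SimpleGraph V) : ℕ :=
  sSup {k | ∃ s : Set V, _root_.IsIndepSet G s ∧ s.ncard = k}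

/-- `s` is a vertex cover of `G`: it meets every edge. -/
def IsVertexCover {V : Type*} (G : SimpleGraph V) (s : Set V) : Prop :=
  ∀ ⦃a b : V⦄, G.Adj a b → a ∈ s ∨ b ∈ s

/-- The vertex covering number of `G`. -/
noncomputable def coverNum {V : Type*} [Fintype V] (G : SimpleGraph V) : ℕ :=
  sInf {k | ∃ s : Set V, _root_.IsVertexCover G s ∧ s.ncard = k}

/-- `s` is a dominating set of `G`. -/
def IsDomSet {V : Type*} (G : SimpleGraph V) (s : Set V) : Prop :=
  ∀ v ∉ s, ∃ u ∈ s, G.Adj u v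

/-- The domination number `γ(G)`. -/
noncomputable def domNum {V : Type*} [Fintype V] (G : SimpleGraph V) : ℕ :=
  sInf {k | ∃ s : Set V, IsDomSet G s ∧ s.ncard = k}

/-- The murtage number `m(G)`: the minimum number of edges whose addition to `G`
strictly decreases the domination number (and `0` when `γ(G) = 1`). -/
noncomputable def murtage {V : Type*} [Fintype V] (G : SimpleGraph V) : ℕ :=
  if domNum G = 1 then 0
  else sInf {k | ∃ H : SimpleGraph V, G ≤ H ∧ domNum H < domNum G ∧
        (H.edgeSet \ G.edgeSet).ncard = k}

/-- `γ⁻(G)`: the minimum number of vertices whose removal strictly decreases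
the domination number. -/
noncomputable def gammaMinus {V : Type*} [Fintype V] (G : SimpleGraph V) : ℕ :=
  sInf {k | ∃ s : Set V, s.ncard = k ∧
        @domNum _ (Set.toFinite sᶜ).fintype (G.induce sᶜ) < domNum G}

/-- The bondage number `b(G)`: the minimum number of edges whose removal strictly
increases the domination number. -/
noncomputable def bondage {V : Type*} [Fintype V] (G : SimpleGraph V) : ℕ :=
  sInf {k | ∃ H : SimpleGraph V, H ≤ G ∧ domNum G < domNum H ∧
        (G.edgeSet \ H.edgeSet).ncard = k}

/-- The maximum degree `Δ(G)`. -/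
noncomputable def maxDeg {V : Type*} [Fintype V] (G : SimpleGraph V) : ℕ :=
  Finset.univ.sup fun v => (G.neighborSet v).ncard

/-!
In `J_n(1)` the vertex `v_1` can only be dominated by `v_1` or `v_2`, and the closed
neighbourhoods of both lie in `{v_1, v_2, v_3}`. Removing that dominator `x` from a minimum
dominating set `S` therefore only undominates vertices among `v_1, v_2, v_3`; joining some other
member of `S` to these three vertices makes `S \ {x}` dominating again, at the cost of at most
three new edges.
-/

section Domination

variable {V : Type*} [Fintype V]

theorem exists_isDomSet_ncard_eq_domNum (G : SimpleGraph V) :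
    ∃ S : Set V, IsDomSet G S ∧ S.ncard = domNum G :=
  Nat.sInf_mem (s := {k | ∃ S : Set V, IsDomSet G S ∧ S.ncard = k})
    ⟨_, Set.univ, fun v hv => absurd (Set.mem_univ v) hv, rfl⟩

theorem murtage_le_ncard_of_closedNbhd_subset {G : SimpleGraph V} {S T : Set V}
    (hS : IsDomSet G S) (hSmin : S.ncard = domNum G) {x : V} (hxS : x ∈ S) (hxT : x ∈ T)
    (hNT : ∀ v, G.Adj x v → v ∈ T) : murtage G ≤ T.ncard := by
  rw [murtage]
  split_ifs with h1
  · exact Nat.zero_le _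
  have hS2 : 1 < S.ncard := by
    have := (Set.ncard_pos (Set.toFinite S)).mpr ⟨x, hxS⟩
    omega
  obtain ⟨w, hwS, hwx⟩ := Set.exists_ne_of_one_lt_ncard hS2 x
  set E : Set (Sym2 V) := (fun t => s(w, t)) '' T
  set H := G ⊔ fromEdgeSet E
  have hdomH : IsDomSet H (S \ {x}) := by
    intro v hv
    by_cases hvT : v ∈ T
    · have hwv : w ≠ v := fun h => hv (h ▸ ⟨hwS, hwx⟩)
      exact ⟨w, ⟨hwS, hwx⟩, Or.inr ((fromEdgeSet_adj E).mpr ⟨⟨v, hvT, rfl⟩, hwv⟩)⟩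
    · have hvS : v ∉ S := by
        rintro h
        obtain rfl : v = x := by simpa [h] using hv
        exact hvT hxT
      obtain ⟨u, huS, hu⟩ := hS v hvS
      have hux : u ≠ x := by rintro rfl; exact hvT (hNT v hu)
      exact ⟨u, ⟨huS, hux⟩, Or.inl hu⟩
  have hHlt : domNum H < domNum G := by
    have : domNum H ≤ (S \ {x}).ncard := Nat.sInf_le ⟨_, hdomH, rfl⟩
    rw [Set.ncard_sdiff_singleton_of_mem hxS, hSmin] at this
    omega
  have hnew : H.edgeSet \ G.edgeSet ⊆ E := by
    rintro e ⟨heH, heG⟩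
    rw [edgeSet_sup, edgeSet_fromEdgeSet] at heH
    exact heH.resolve_left heG |>.1
  refine le_trans (Nat.sInf_le ?_) (?_ : (H.edgeSet \ G.edgeSet).ncard ≤ _)
  · exact ⟨H, le_sup_left, hHlt, rfl⟩
  calc (H.edgeSet \ G.edgeSet).ncard ≤ E.ncard := Set.ncard_le_ncard hnew (Set.toFinite E)
    _ ≤ T.ncard := Set.ncard_image_le (Set.toFinite T)

end Domination

theorem Fin.ncard_setOf_val_lt_le (n k : ℕ) : {v : Fin n | (v : ℕ) < k}.ncard ≤ k := by
  calc {v : Fin n | (v : ℕ) < k}.ncard ≤ (Set.Iio k).ncard :=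
        Set.ncard_le_ncard_of_injOn Fin.val (fun v hv => hv) Fin.val_injective.injOn
          (Set.finite_Iio k)
    _ = k := by simp

theorem jacoInDeg_eq (j : ℕ) : jacoInDeg j =
    ((Finset.range j).attach.filter (fun i => j ≤ 2 * i.1 - jacoInDeg i.1)).card := by
  rw [jacoInDeg, Nat.strongRecOn_eq]; rfl

theorem jacoInDeg_one : jacoInDeg 1 = 0 := by
  rw [jacoInDeg_eq, Finset.card_eq_zero, Finset.filter_eq_empty_iff]
  rintro ⟨i, hi⟩ -
  obtain rfl : i = 0 := by simpa using hi
  simp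

theorem one_le_jacoInDeg_two : 1 ≤ jacoInDeg 2 := by
  rw [jacoInDeg_eq, Finset.one_le_card]
  exact ⟨⟨1, by simp⟩, by simp [jacoInDeg_one]⟩

theorem JacoInf.eq_two_of_adj_one {j : ℕ} (h : JacoInf.Adj 1 j) : j = 2 := by
  have := jacoInDeg_one
  change (1 < j ∧ j ≤ 2 * 1 - jacoInDeg 1) ∨ (j < 1 ∧ 1 ≤ 2 * j - jacoInDeg j) at h
  omega

theorem JacoInf.le_three_of_adj_two {j : ℕ} (h : JacoInf.Adj 2 j) : j ≤ 3 := by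
  have := one_le_jacoInDeg_two
  change (2 < j ∧ j ≤ 2 * 2 - jacoInDeg 2) ∨ (j < 2 ∧ 2 ≤ 2 * j - jacoInDeg j) at h
  omega

theorem Jaco.exists_mem_closedNbhd_lt_three {n : ℕ} (hn : 1 ≤ n) {S : Set (Fin n)}
    (hS : IsDomSet (Jaco n) S) :
    ∃ x ∈ S, (x : ℕ) < 3 ∧ ∀ v, (Jaco n).Adj x v → (v : ℕ) < 3 := by
  have hx : ∃ x ∈ S, (x : ℕ) ≤ 1 := by
    by_cases h0 : (⟨0, hn⟩ : Fin n) ∈ S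
    · exact ⟨_, h0, zero_le_one⟩
    · obtain ⟨u, huS, hu⟩ := hS _ h0
      have : (u : ℕ) + 1 = 2 := JacoInf.eq_two_of_adj_one hu.symm
      exact ⟨u, huS, by omega⟩
  obtain ⟨x, hxS, hx1⟩ := hx
  refine ⟨x, hxS, by omega, fun v hv => ?_⟩
  change JacoInf.Adj ((x : ℕ) + 1) ((v : ℕ) + 1) at hv
  obtain hx0 | hx1 : (x : ℕ) = 0 ∨ (x : ℕ) = 1 := by omega
  · rw [hx0] at hv
    have := JacoInf.eq_two_of_adj_one hv
    omega
  · rw [hx1] at hv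
    have := JacoInf.le_three_of_adj_two hv
    omega

/-- For every `n ≥ 1`, `0 ≤ m(J_n(1)) ≤ 3`. -/
theorem jaco_murtage_le_three (n : ℕ) (hn : 1 ≤ n) :
    0 ≤ murtage (Jaco n) ∧ murtage (Jaco n) ≤ 3 := by
  refine ⟨Nat.zero_le _, ?_⟩
  obtain ⟨S, hS, hSmin⟩ := exists_isDomSet_ncard_eq_domNum (Jaco n)
  obtain ⟨x, hxS, hx3, hN3⟩ := Jaco.exists_mem_closedNbhd_lt_three hn hS
  calc murtage (Jaco n) ≤ {v : Fin n | (v : ℕ) < 3}.ncard :=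
        murtage_le_ncard_of_closedNbhd_subset hS hSmin hxS hx3 hN3
    _ ≤ 3 := Fin.ncard_setOf_val_lt_le n 3
end

section
/- For n ∈ {9, 10, 11}, the murtage number of the underlying graph of the finite Jaco graph J_n(1) equals 3; in particular the upper bound m(J_n(1)) ≤ 3 is sharp. -/
open SimpleGraph

/-!
When `γ(G) = 2`, lowering the domination number by adding edges means creating a vertex `w`
adjacent to all others, and the cheapest way to do that adds exactly the edges of `Gᶜ` at `w`;
hence `m(G)` is the minimum degree of `Gᶜ`. For `n ∈ {9, 10, 11}` the pair `{v_2, v_7}` dominates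
`J_n(1)`, while every vertex misses at least three others (exactly three at `v_5`, `v_6`, `v_7`
respectively), so `γ(J_n(1)) = 2` and `m(J_n(1)) = 3`. The in-degrees `0, 1, 1, 1, 2, 2, 3, 3, 3,
4, 4` of `v_1, …, v_11` follow from the defining recursion; after that the finite graphs are
checked by evaluation.
-/

open Finset

namespace SimpleGraph

variable {V : Type*}

lemma ncard_incidenceSet_eq_degree [Fintype V] [DecidableEq V] (G : SimpleGraph V)
    [DecidableRel G.Adj] (v : V) : (G.incidenceSet v).ncard = G.degree v := by
  rw [← coe_incidenceFinset, Set.ncard_coe_finset, card_incidenceFinset_eq_degree]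

lemma compl_incidenceSet_subset_edgeSet_sdiff {G H : SimpleGraph V} {w : V}
    (hw : ∀ u ≠ w, H.Adj w u) : Gᶜ.incidenceSet w ⊆ H.edgeSet \ G.edgeSet := by
  rintro e ⟨he, hwe⟩
  obtain ⟨u, rfl⟩ := Sym2.mem_iff_exists.mp hwe
  exact ⟨hw u (Ne.symm he.1), he.2⟩

lemma edgeSet_sup_fromRel_sdiff_edgeSet (G : SimpleGraph V) (w : V) :
    (G ⊔ fromRel fun a _ => a = w).edgeSet \ G.edgeSet = Gᶜ.incidenceSet w := by
  ext e
  induction e using Sym2.ind with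
  | _ a b =>
    simp only [Set.mem_sdiff, mem_edgeSet, sup_adj, fromRel_adj, incidenceSet, Set.mem_ofPred_eq,
      compl_adj, Sym2.mem_iff]
    aesop

end SimpleGraph

section Domination

variable {V : Type*} [Fintype V]

lemma domNum_le_card {G : SimpleGraph V} (s : Finset V) (hs : ∀ v ∉ s, ∃ u ∈ s, G.Adj u v) :
    domNum G ≤ #s :=
  Nat.sInf_le ⟨s, hs, Set.ncard_coe_finset s⟩

lemma exists_forall_adj_of_domNum_lt_two [Nonempty V] {G : SimpleGraph V} (h : domNum G < 2) :
    ∃ w, ∀ u ≠ w, G.Adj w u := by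
  obtain ⟨s, hs, hcard⟩ : domNum G ∈ {k | ∃ s : Set V, IsDomSet G s ∧ s.ncard = k} :=
    Nat.sInf_mem ⟨_, Set.univ, fun v hv => absurd (Set.mem_univ v) hv, rfl⟩
  obtain rfl | ⟨w, rfl⟩ := (Set.ncard_le_one_iff_eq).mp (by omega : s.ncard ≤ 1)
  · obtain ⟨v⟩ := ‹Nonempty V›
    obtain ⟨u, hu, -⟩ := hs v (Set.notMem_empty v)
    exact absurd hu (Set.notMem_empty u)
  · refine ⟨w, fun u hu => ?_⟩
    obtain ⟨_, rfl, hadj⟩ := hs u hu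
    exact hadj

theorem murtage_eq_minDegree_compl [DecidableEq V] {G : SimpleGraph V} [DecidableRel G.Adj]
    (hdom : domNum G ≤ 2) (hpos : 0 < Gᶜ.minDegree) : murtage G = Gᶜ.minDegree := by
  have : Nonempty V := by
    by_contra h
    rw [not_nonempty_iff] at h
    simp at hpos
  have hγ : domNum G = 2 := by
    refine le_antisymm hdom (not_lt.mp fun hlt => ?_)
    obtain ⟨w, hw⟩ := exists_forall_adj_of_domNum_lt_two hlt
    obtain ⟨u, hwu, hnadj⟩ :=
      Gᶜ.degree_pos_iff_exists_adj w |>.mp (hpos.trans_le (Gᶜ.minDegree_le_degree w))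
    exact hnadj (hw u (Ne.symm hwu))
  rw [murtage, if_neg (by omega), hγ]
  refine IsLeast.csInf_eq ⟨?_, ?_⟩
  · obtain ⟨w, hw⟩ := Gᶜ.exists_minimal_degree_vertex
    refine ⟨G ⊔ fromRel fun a _ => a = w, le_sup_left, ?_, ?_⟩
    · have : domNum (G ⊔ fromRel fun a _ => a = w) ≤ 1 :=
        domNum_le_card {w} fun v hv => ⟨w, mem_singleton_self w,
          Or.inr ⟨Ne.symm (by simpa using hv), Or.inl rfl⟩⟩
      omega
    · rw [edgeSet_sup_fromRel_sdiff_edgeSet, ncard_incidenceSet_eq_degree, hw]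
  · rintro _ ⟨H, -, hH, rfl⟩
    obtain ⟨w, hw⟩ := exists_forall_adj_of_domNum_lt_two hH
    calc Gᶜ.minDegree ≤ Gᶜ.degree w := Gᶜ.minDegree_le_degree w
      _ = (Gᶜ.incidenceSet w).ncard := (Gᶜ.ncard_incidenceSet_eq_degree w).symm
      _ ≤ (H.edgeSet \ G.edgeSet).ncard :=
        Set.ncard_le_ncard (compl_incidenceSet_subset_edgeSet_sdiff hw)

end Domination

lemma jacoInDeg_eq_s13 (j : ℕ) : jacoInDeg j = #{i ∈ range j | j ≤ 2 * i - jacoInDeg i} := by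
  rw [jacoInDeg, Nat.strongRecOn, WellFounded.fix_eq]
  exact (congrArg card (filter_attach (fun i => j ≤ 2 * i - jacoInDeg i) (range j))).trans
    (by rw [card_map, card_attach])

lemma jacoInDeg_eq_of_forall_le {d : ℕ → ℕ} {N : ℕ}
    (hd : ∀ j ≤ N, d j = #{i ∈ range j | j ≤ 2 * i - d i}) {j : ℕ} (hj : j ≤ N) :
    jacoInDeg j = d j := by
  induction j using Nat.strong_induction_on with
  | _ j ih =>
    rw [jacoInDeg_eq_s13, hd j hj]
    refine congrArg card (filter_congr fun i hi => ?_)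
    rw [ih i (mem_range.mp hi) (by have := mem_range.mp hi; omega)]

def jacoInDegTable (j : ℕ) : ℕ := [0, 0, 1, 1, 1, 2, 2, 3, 3, 3, 4, 4].getD j 0

lemma jacoInDeg_eq_table {j : ℕ} (hj : j ≤ 11) : jacoInDeg j = jacoInDegTable j :=
  jacoInDeg_eq_of_forall_le (by decide) hj

/-- `JacoInf` with the in-degree function replaced by `d`: for a computable `d` its adjacency is
decidable, unlike that of `JacoInf`. -/
def jacoGraphOf (d : ℕ → ℕ) : SimpleGraph ℕ where
  Adj i j := (i < j ∧ j ≤ 2 * i - d i) ∨ (j < i ∧ i ≤ 2 * j - d j)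
  symm := ⟨fun _ _ h => h.symm⟩
  loopless := ⟨fun i h => by rcases h with ⟨h, -⟩ | ⟨h, -⟩ <;> omega⟩

instance (d : ℕ → ℕ) : DecidableRel (jacoGraphOf d).Adj := fun i j =>
  inferInstanceAs (Decidable ((i < j ∧ j ≤ 2 * i - d i) ∨ (j < i ∧ i ≤ 2 * j - d j)))

lemma jaco_eq_comap_jacoGraphOf {n : ℕ} {d : ℕ → ℕ} (hd : ∀ j ≤ n, jacoInDeg j = d j) :
    Jaco n = (jacoGraphOf d).comap fun k : Fin n => (k : ℕ) + 1 := by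
  ext a b
  simp only [Jaco, JacoInf, jacoGraphOf, comap_adj, hd _ a.isLt, hd _ b.isLt]

/-- For `n ∈ {9, 10, 11}`, `m(J_n(1)) = 3`; in particular the upper
bound `m(J_n(1)) ≤ 3` is sharp. -/
theorem jaco_murtage_eq_three (n : ℕ) (hn : n = 9 ∨ n = 10 ∨ n = 11) :
    murtage (Jaco n) = 3 := by
  rw [jaco_eq_comap_jacoGraphOf fun j hj => jacoInDeg_eq_table (by omega)]
  have hmin :
      ((jacoGraphOf jacoInDegTable).comap fun k : Fin n => (k : ℕ) + 1)ᶜ.minDegree = 3 := by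
    rcases hn with rfl | rfl | rfl <;> decide
  rw [murtage_eq_minDegree_compl ?_ (by omega), hmin]
  -- `{1, 6}` is `{v_2, v_7}`
  rcases hn with rfl | rfl | rfl <;> exact domNum_le_card {1, 6} (by decide)
end
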